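/- Let $z \in \mathbb{C}$ and let $\phi_0(z)$ be the $4\times 4$ matrix with rows $(-z, iz, -iz, z)$, $(-z^3, -iz^3, iz^3, z^3)$, $(e^{-z}, e^{iz}, e^{-iz}, e^{z})$, $(z^2 e^{-z}, -z^2 e^{iz}, -z^2 e^{-iz}, z^2 e^{z})$. Then $\det \phi_0(z) = 16 i z^6 \cos z \cos(iz)$. -/

import Mathlib

/-! The determinant is a polynomial identity in `z` and the four exponentials, which may be
replaced by arbitrary `a, b, c, d`: it equals `4 i z⁶ (a + d)(b + c)`. With `a = e^{-z}`,
`d = e^{z}` and `b = e^{iz}`, `c = e^{-iz}`, the two factors are `2 cos (iz)` and `2 cos z`. -/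

open Complex Matrix

theorem det_phi0_of_entries (z a b c d : ℂ) :
    Matrix.det !![-z, I * z, -(I * z), z;
                  -z ^ 3, -(I * z ^ 3), I * z ^ 3, z ^ 3;
                  a, b, c, d;
                  z ^ 2 * a, -(z ^ 2) * b, -(z ^ 2) * c, z ^ 2 * d]
      = 4 * I * z ^ 6 * (a + d) * (b + c) := by
  simp only [neg_mul, det_succ_row_zero, Nat.succ_eq_add_one, Nat.reduceAdd, Fin.isValue, of_apply,
    cons_val', cons_val_fin_one, cons_val_zero, submatrix_apply, Fin.succ_zero_eq_one, Fin.succAbove,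
    cons_val_one, submatrix_submatrix, Function.comp_apply, Fin.succ_one_eq_two, cons_val, det_unique,
    Fin.default_eq_zero, Fin.reduceSucc, Fin.castSucc_zero, Fin.sum_univ_succ, Fin.coe_ofNat_eq_mod,
    Nat.zero_mod, pow_zero, one_mul, lt_self_iff_false, ↓reduceIte, Fin.castSucc_one, Finset.univ_unique,
    Fin.val_succ, Fin.val_eq_zero, zero_add, pow_one, Fin.castSucc_succ, Fin.succ_pos,
    Finset.sum_neg_distrib, Finset.sum_singleton, not_lt_zero, Fin.reduceCastSucc, even_two, Even.neg_pow,
    one_pow, Fin.reduceLT, mul_neg, neg_neg, cons_val_succ, Fin.lt_one_iff, Fin.reduceEq]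
  ring

theorem stmt_1 (z : ℂ) :
    Matrix.det !![-z, I * z, -(I * z), z;
                  -z ^ 3, -(I * z ^ 3), I * z ^ 3, z ^ 3;
                  Complex.exp (-z), Complex.exp (I * z), Complex.exp (-(I * z)), Complex.exp z;
                  z ^ 2 * Complex.exp (-z), -(z ^ 2) * Complex.exp (I * z),
                    -(z ^ 2) * Complex.exp (-(I * z)), z ^ 2 * Complex.exp z]
      = 16 * I * z ^ 6 * Complex.cos z * Complex.cos (I * z) := by
  have two_cos_eq : exp (I * z) + exp (-(I * z)) = 2 * cos z := by
    rw [two_cos, neg_mul, mul_comm z I]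
  have two_cos_I_mul_eq : exp (-z) + exp z = 2 * cos (I * z) := by
    rw [mul_comm I, cos_mul_I, two_cosh, add_comm]
  rw [det_phi0_of_entries, two_cos_eq, two_cos_I_mul_eq]
  ring
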